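/- For the Cauchy distribution C(σ) with Lebesgue density x ↦ σ/(π(σ² + x²)), the sparsity rate ρ₁(σ) = ∫ (1 − e^{−x²/2}) · σ/(π(σ² + x²)) dx satisfies lim_{σ→0⁺} ρ₁(σ)/σ = √(2/π). -/

import Mathlib

open MeasureTheory Real Filter

/-- The sparsity rate of the Cauchy distribution `C(σ)` with Lebesgue density
`x ↦ σ/(π(σ² + x²))`. -/
noncomputable def cauchySparsityRate (σ : ℝ) : ℝ :=
  ∫ x : ℝ, (1 - Real.exp (-(x ^ 2) / 2)) * (σ / (Real.pi * (σ ^ 2 + x ^ 2)))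

namespace Stmt16Aux

/-- Numerator of the integrand. -/
noncomputable def num (x : ℝ) : ℝ := 1 - Real.exp (-(x ^ 2) / 2)

lemma num_nonneg (x : ℝ) : 0 ≤ num x := by
  have h : Real.exp (-(x ^ 2) / 2) ≤ 1 := Real.exp_le_one_iff.mpr (by nlinarith [sq_nonneg x])
  simp only [num, sub_nonneg]; exact h

lemma num_le_one (x : ℝ) : num x ≤ 1 := by
  have h : (0:ℝ) < Real.exp (-(x ^ 2) / 2) := Real.exp_pos _
  simp only [num]; linarith

lemma num_le_half_sq (x : ℝ) : num x ≤ x ^ 2 / 2 := by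
  have h := Real.add_one_le_exp (-(x ^ 2) / 2)
  simp only [num]; linarith

/-- The limiting integrand (without `1/π`). -/
noncomputable def dd (x : ℝ) : ℝ := num x / x ^ 2

lemma dd_nonneg (x : ℝ) : 0 ≤ dd x := div_nonneg (num_nonneg x) (sq_nonneg x)

lemma dd_le (x : ℝ) : dd x ≤ 2 * (1 + x ^ 2)⁻¹ := by
  rcases eq_or_ne x 0 with rfl | hx
  · simp [dd]
  · have hx2 : (0:ℝ) < x ^ 2 := by positivity
    have h1 : num x ≤ 1 := num_le_one x
    have h2 : num x ≤ x ^ 2 / 2 := num_le_half_sq x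
    rw [dd, div_le_iff₀ hx2]
    have hpos : (0:ℝ) < 1 + x ^ 2 := by positivity
    rw [mul_comm 2 (1 + x ^ 2)⁻¹, mul_assoc, ← div_eq_inv_mul]
    rw [le_div_iff₀ hpos]
    nlinarith [num_nonneg x]

lemma measurable_dd : Measurable dd := by
  apply Measurable.div
  · exact (measurable_const.sub ((measurable_id.pow_const 2).neg.div_const 2).exp)
  · exact measurable_id.pow_const 2

lemma integrable_dd : Integrable dd := by
  have hb : Integrable (fun x : ℝ => 2 * (1 + x ^ 2)⁻¹) := integrable_inv_one_add_sq.const_mul 2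
  refine hb.mono' measurable_dd.aestronglyMeasurable ?_
  filter_upwards with x
  rw [Real.norm_eq_abs, abs_of_nonneg (dd_nonneg x)]
  exact dd_le x

/-- Antiderivative of `dd x - exp (-(x^2)/2)` on `(0, ∞)`. -/
noncomputable def FF (x : ℝ) : ℝ := -(num x / x)

lemma hasDerivAt_num (x : ℝ) : HasDerivAt num (x * Real.exp (-(x ^ 2) / 2)) x := by
  have h1 : HasDerivAt (fun x : ℝ => -(x ^ 2) / 2) (-x) x := by
    have := ((hasDerivAt_pow 2 x).neg).div_const 2
    exact this.congr_deriv (by ring)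
  have h2 := (Real.hasDerivAt_exp (-(x ^ 2) / 2)).comp x h1
  have := (hasDerivAt_const x (1:ℝ)).sub h2
  refine this.congr_deriv ?_
  ring

lemma hasDerivAt_FF {x : ℝ} (hx : x ≠ 0) :
    HasDerivAt FF (dd x - Real.exp (-(x ^ 2) / 2)) x := by
  have h := ((hasDerivAt_num x).div (hasDerivAt_id x) hx).neg
  refine h.congr_deriv ?_
  simp only [id_eq, dd]
  field_simp [dd, num]
  ring

lemma tendsto_FF_zero : Tendsto FF (nhdsWithin 0 (Set.Ici 0)) (nhds 0) := by
  apply squeeze_zero_norm' (a := fun x : ℝ => |x|)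
  · filter_upwards [self_mem_nhdsWithin] with x (hx : (0:ℝ) ≤ x)
    rcases eq_or_lt_of_le hx with rfl | hx'
    · simp [FF, num]
    · have h1 : num x / x ≤ x / 2 := by
        rw [div_le_div_iff₀ hx' (by norm_num : (0:ℝ) < 2)]
        nlinarith [num_le_half_sq x]
      have h2 : 0 ≤ num x / x := div_nonneg (num_nonneg x) hx'.le
      rw [FF, norm_neg, Real.norm_eq_abs, abs_of_nonneg h2, abs_of_nonneg hx'.le]
      nlinarith
  · have : Tendsto (fun x : ℝ => |x|) (nhds 0) (nhds 0) := by
      simpa using continuous_abs.tendsto (0 : ℝ)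
    exact this.mono_left nhdsWithin_le_nhds

lemma tendsto_FF_atTop : Tendsto FF atTop (nhds 0) := by
  apply squeeze_zero_norm' (a := fun x : ℝ => x⁻¹)
  · filter_upwards [eventually_gt_atTop (0:ℝ)] with x hx
    have h2 : 0 ≤ num x / x := div_nonneg (num_nonneg x) hx.le
    rw [FF, norm_neg, Real.norm_eq_abs, abs_of_nonneg h2, div_le_iff₀ hx,
      inv_mul_cancel₀ hx.ne']
    exact num_le_one x
  · exact tendsto_inv_atTop_zero

lemma integrable_gauss : Integrable (fun x : ℝ => Real.exp (-(x ^ 2) / 2)) := by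
  have h := integrable_exp_neg_mul_sq (by norm_num : (0:ℝ) < 1/2)
  refine h.congr (Filter.Eventually.of_forall fun x => ?_)
  ring_nf

lemma integral_dd_Ioi : ∫ x in Set.Ioi (0:ℝ), dd x = Real.sqrt (2 * Real.pi) / 2 := by
  have hderiv : ∀ x ∈ Set.Ioi (0:ℝ),
      HasDerivAt FF (dd x - Real.exp (-(x ^ 2) / 2)) x :=
    fun x hx => hasDerivAt_FF (ne_of_gt hx)
  have hint : IntegrableOn (fun x => dd x - Real.exp (-(x ^ 2) / 2)) (Set.Ioi 0) :=
    (integrable_dd.sub integrable_gauss).integrableOn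
  have hcont : ContinuousWithinAt FF (Set.Ici 0) 0 := by
    rw [ContinuousWithinAt]
    have : FF 0 = 0 := by simp [FF, num]
    rw [this]
    exact tendsto_FF_zero
  have key := integral_Ioi_of_hasDerivAt_of_tendsto hcont hderiv hint tendsto_FF_atTop
  have hFF0 : FF 0 = 0 := by simp [FF, num]
  rw [hFF0, sub_zero] at key
  have hsub : ∫ x in Set.Ioi (0:ℝ), (dd x - Real.exp (-(x ^ 2) / 2))
      = (∫ x in Set.Ioi (0:ℝ), dd x) - ∫ x in Set.Ioi (0:ℝ), Real.exp (-(x ^ 2) / 2) :=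
    integral_sub integrable_dd.integrableOn integrable_gauss.integrableOn
  have hgauss : ∫ x in Set.Ioi (0:ℝ), Real.exp (-(x ^ 2) / 2)
      = Real.sqrt (2 * Real.pi) / 2 := by
    have h := integral_gaussian_Ioi (1/2)
    have heq : ∀ x : ℝ, Real.exp (-(x ^ 2) / 2) = Real.exp (-(1/2) * x ^ 2) := by
      intro x; ring_nf
    simp_rw [heq, h]
    norm_num
    ring
  rw [hsub, hgauss] at key
  linarith

lemma integral_dd : ∫ x : ℝ, dd x = Real.sqrt (2 * Real.pi) := by
  have hiic : ∫ x in Set.Iic (0:ℝ), dd x = ∫ x in Set.Ioi (0:ℝ), dd x := by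
    rw [show (0:ℝ) = -0 by norm_num, ← integral_comp_neg_Ioi]
    simp only [neg_zero]
    congr 1
    funext x
    simp [dd, num]
  rw [← intervalIntegral.integral_Iic_add_Ioi integrable_dd.integrableOn integrable_dd.integrableOn,
    hiic, integral_dd_Ioi]
  ring

lemma integral_limit : ∫ x : ℝ, dd x / Real.pi = Real.sqrt (2 / Real.pi) := by
  rw [integral_div, integral_dd]
  rw [show (2:ℝ) / Real.pi = (2 * Real.pi) / Real.pi ^ 2 by
    field_simp]
  rw [Real.sqrt_div (by positivity), Real.sqrt_sq Real.pi_pos.le]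

end Stmt16Aux

open Stmt16Aux in
/-- the sparsity rate of `C(σ)` satisfies `ρ₁(σ)/σ → √(2/π)` as `σ → 0⁺`. -/
theorem stmt16 :
    Tendsto (fun σ : ℝ => cauchySparsityRate σ / σ) (nhdsWithin 0 (Set.Ioi 0))
      (nhds (Real.sqrt (2 / Real.pi))) := by
  have hπ : (0:ℝ) < Real.pi := Real.pi_pos
  -- The rescaled integrand
  set G : ℝ → ℝ → ℝ := fun σ x => num x / (Real.pi * (σ ^ 2 + x ^ 2)) with hG
  have hae0 : ∀ᵐ x : ℝ, x ≠ 0 := by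
    rw [ae_iff]
    have : {x : ℝ | ¬ x ≠ 0} = {0} := by ext x; simp
    rw [this]
    exact measure_singleton 0
  -- dominated convergence
  have hDCT : Tendsto (fun σ => ∫ x : ℝ, G σ x) (nhdsWithin 0 (Set.Ioi 0))
      (nhds (∫ x : ℝ, dd x / Real.pi)) := by
    apply tendsto_integral_filter_of_dominated_convergence
      (bound := fun x : ℝ => 2 * (1 + x ^ 2)⁻¹ / Real.pi)
    · filter_upwards [self_mem_nhdsWithin] with σ (hσ : (0:ℝ) < σ)
      apply Continuous.aestronglyMeasurable
      apply Continuous.div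
      · exact continuous_const.sub (((continuous_id.pow 2).neg.div_const 2).rexp)
      · exact continuous_const.mul (continuous_const.add (continuous_id.pow 2))
      · intro x
        have : (0:ℝ) < σ ^ 2 + x ^ 2 := by positivity
        positivity
    · filter_upwards [self_mem_nhdsWithin] with σ (hσ : (0:ℝ) < σ)
      filter_upwards [hae0] with x hx
      have hx2 : (0:ℝ) < x ^ 2 := by positivity
      have hd1 : (0:ℝ) < Real.pi * (σ ^ 2 + x ^ 2) := by positivity
      have hGle : G σ x ≤ dd x / Real.pi := by
        rw [hG]
        have h1 : num x / (Real.pi * (σ ^ 2 + x ^ 2)) ≤ num x / (Real.pi * x ^ 2) := by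
          apply div_le_div_of_nonneg_left (num_nonneg x) (by positivity)
          nlinarith [sq_nonneg σ]
        calc num x / (Real.pi * (σ ^ 2 + x ^ 2)) ≤ num x / (Real.pi * x ^ 2) := h1
          _ = dd x / Real.pi := by rw [dd, div_div, mul_comm (x ^ 2) Real.pi]
      have hGnn : 0 ≤ G σ x := div_nonneg (num_nonneg x) hd1.le
      rw [Real.norm_eq_abs, abs_of_nonneg hGnn]
      calc G σ x ≤ dd x / Real.pi := hGle
        _ ≤ 2 * (1 + x ^ 2)⁻¹ / Real.pi := by
            gcongr
            exact dd_le x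
    · exact (integrable_inv_one_add_sq.const_mul 2).div_const Real.pi
    · filter_upwards [hae0] with x hx
      have hx2 : (0:ℝ) < x ^ 2 := by positivity
      have hlim : Tendsto (fun σ : ℝ => Real.pi * (σ ^ 2 + x ^ 2))
          (nhdsWithin 0 (Set.Ioi 0)) (nhds (Real.pi * x ^ 2)) := by
        have hc : Continuous (fun σ : ℝ => Real.pi * (σ ^ 2 + x ^ 2)) :=
          continuous_const.mul ((continuous_id.pow 2).add continuous_const)
        have h2 := (hc.tendsto 0).mono_left
          (nhdsWithin_le_nhds (s := Set.Ioi (0:ℝ)))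
        simpa using h2
      have := Tendsto.div (tendsto_const_nhds (x := num x)
        (f := nhdsWithin (0:ℝ) (Set.Ioi 0))) hlim (by positivity)
      convert this using 2
      · rfl
      rw [dd, div_div, mul_comm (x ^ 2) Real.pi]
  -- identify the functions
  have heq : ∀ᶠ σ in nhdsWithin (0:ℝ) (Set.Ioi 0),
      (fun σ => ∫ x : ℝ, G σ x) σ = cauchySparsityRate σ / σ := by
    filter_upwards [self_mem_nhdsWithin] with σ (hσ : (0:ℝ) < σ)
    rw [cauchySparsityRate, ← integral_div]
    congr 1
    funext x
    have hd : (0:ℝ) < Real.pi * (σ ^ 2 + x ^ 2) := by positivity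
    rw [hG]
    field_simp [num]
    ring
    rw [num]; ring_nf
  rw [← integral_limit]
  exact Tendsto.congr' heq hDCT
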